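/- Let 0 < λ1 < λ2 and let (u, v) be a solution of (S_{λ1}) with u₀ + u ≤ 0 and v₀ + v ≤ 0 on V. Then (u, v) is a lower solution of (S_{λ2}); consequently, if (S_{λ1}) admits a solution then (S_{λ2}) admits a solution. -/
import Mathlib


open Real Finset

/-- The μ-Laplacian on a finite weighted graph. -/
noncomputable def graphLap {V : Type*} [Fintype V] (ω : V → V → ℝ) (μ : V → ℝ)
    (f : V → ℝ) (x : V) : ℝ :=
  (1 / μ x) * ∑ y, ω x y * (f y - f x)

/-- The integral of `f` over `V` with respect to the measure `μ`. -/
noncomputable def graphInt {V : Type*} [Fintype V] (μ : V → ℝ) (f : V → ℝ) : ℝ :=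
  ∑ x, μ x * f x

/-- The total volume `|V|` of the graph. -/
noncomputable def graphVol {V : Type*} [Fintype V] (μ : V → ℝ) : ℝ :=
  ∑ x, μ x

/-- The Dirac delta mass at vertex `p`. -/
noncomputable def diracDelta {V : Type*} [DecidableEq V] (μ : V → ℝ) (p x : V) : ℝ :=
  if x = p then 1 / μ p else 0

/-- `primFun F t = ∫_{√t}^{1} 2 s F(s²) ds`; this gives `g` from `G` and `h` from `H`. -/
noncomputable def primFun (F : ℝ → ℝ) (t : ℝ) : ℝ :=
  ∫ s in Real.sqrt t..(1 : ℝ), 2 * s * F (s ^ 2)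

/-- The pointwise squared gradient `|∇ f|²(x)`. -/
noncomputable def gradSq {V : Type*} [Fintype V] (ω : V → V → ℝ) (μ : V → ℝ)
    (f : V → ℝ) (x : V) : ℝ :=
  (1 / (2 * μ x)) * ∑ y, ω x y * (f y - f x) ^ 2

/-- The gradient norm `‖∇ f‖₂ = (∫_V |∇ f|² dμ)^{1/2}`. -/
noncomputable def gradNorm {V : Type*} [Fintype V] (ω : V → V → ℝ) (μ : V → ℝ)
    (f : V → ℝ) : ℝ :=
  Real.sqrt (graphInt μ (gradSq ω μ f))

/-- The mean value `f̄ = (1/|V|) ∫_V f dμ`. -/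
noncomputable def graphAvg {V : Type*} [Fintype V] (μ : V → ℝ) (f : V → ℝ) : ℝ :=
  (1 / graphVol μ) * graphInt μ f

/-- The `W^{1,2}(V)` norm, `(∫_V (|∇ f|² + f²) dμ)^{1/2}`. -/
noncomputable def sobolevNorm {V : Type*} [Fintype V] (ω : V → V → ℝ) (μ : V → ℝ)
    (f : V → ℝ) : ℝ :=
  Real.sqrt (graphInt μ (fun x => gradSq ω μ f x + f x ^ 2))

/-- `(u, v)` is a solution of the system `(S_λ)`. -/
def isSolution {V : Type*} [Fintype V] (ω : V → V → ℝ) (μ : V → ℝ)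
    (G H : ℝ → ℝ) (N1 N2 : ℕ) (u₀ v₀ : V → ℝ) (lam : ℝ) (u v : V → ℝ) : Prop :=
  ∀ x, graphLap ω μ u x =
      -lam * Real.exp (v₀ x + v x) * H (Real.exp (v₀ x + v x)) *
        primFun G (Real.exp (u₀ x + u x)) + 4 * Real.pi * N1 / graphVol μ ∧
    graphLap ω μ v x =
      -lam * Real.exp (u₀ x + u x) * G (Real.exp (u₀ x + u x)) *
        primFun H (Real.exp (v₀ x + v x)) + 4 * Real.pi * N2 / graphVol μ

/-- `(u, v)` is a lower solution of the system `(S_λ)`. -/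
def isLowerSolution {V : Type*} [Fintype V] (ω : V → V → ℝ) (μ : V → ℝ)
    (G H : ℝ → ℝ) (N1 N2 : ℕ) (u₀ v₀ : V → ℝ) (lam : ℝ) (u v : V → ℝ) : Prop :=
  ∀ x, graphLap ω μ u x ≥
      -lam * Real.exp (v₀ x + v x) * H (Real.exp (v₀ x + v x)) *
        primFun G (Real.exp (u₀ x + u x)) + 4 * Real.pi * N1 / graphVol μ ∧
    graphLap ω μ v x ≥
      -lam * Real.exp (u₀ x + u x) * G (Real.exp (u₀ x + u x)) *
        primFun H (Real.exp (v₀ x + v x)) + 4 * Real.pi * N2 / graphVol μ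

/-- `(uM, vM)` is a maximal solution of `(S_λ)`: it solves the system and any other
solution lies strictly below it. -/
def isMaximalSolution {V : Type*} [Fintype V] (ω : V → V → ℝ) (μ : V → ℝ)
    (G H : ℝ → ℝ) (N1 N2 : ℕ) (u₀ v₀ : V → ℝ) (lam : ℝ) (uM vM : V → ℝ) : Prop :=
  isSolution ω μ G H N1 N2 u₀ v₀ lam uM vM ∧
    ∀ u' v', isSolution ω μ G H N1 N2 u₀ v₀ lam u' v' → (u', v') ≠ (uM, vM) →
      ∀ x, u' x < uM x ∧ v' x < vM x


lemma integrand_cont {P : ℝ → ℝ} (hP : ContinuousOn P (Set.Ici 0)) :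
    Continuous fun s : ℝ => 2 * s * P (s ^ 2) := by
  have h : ContinuousOn (fun s : ℝ => P (s ^ 2)) Set.univ :=
    hP.comp (continuous_pow 2).continuousOn (fun s _ => sq_nonneg s)
  exact (continuous_const.mul continuous_id).mul (continuousOn_univ.mp h)

lemma primFun_nonneg {P : ℝ → ℝ} (hPpos : ∀ s, 0 ≤ s → 0 < P s)
    {t : ℝ} (ht : t ≤ 1) : 0 ≤ primFun P t := by
  apply intervalIntegral.integral_nonneg
  · exact Real.sqrt_le_one.mpr ht
  · intro s hs
    have h0 : 0 ≤ s := le_trans (Real.sqrt_nonneg t) hs.1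
    have := hPpos (s ^ 2) (sq_nonneg s)
    nlinarith

lemma primFun_anti {P : ℝ → ℝ} (hP : ContinuousOn P (Set.Ici 0))
    (hPpos : ∀ s, 0 ≤ s → 0 < P s)
    {t t' : ℝ} (ht : 0 ≤ t) (htt' : t ≤ t') :
    primFun P t' ≤ primFun P t := by
  have hc := integrand_cont hP
  have hsum := intervalIntegral.integral_add_adjacent_intervals
    (hc.intervalIntegrable (μ := MeasureTheory.volume) (Real.sqrt t) (Real.sqrt t'))
    (hc.intervalIntegrable (μ := MeasureTheory.volume) (Real.sqrt t') 1)
  have hnn : 0 ≤ ∫ s in Real.sqrt t..Real.sqrt t', 2 * s * P (s ^ 2) := by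
    apply intervalIntegral.integral_nonneg (Real.sqrt_le_sqrt htt')
    intro s hs
    have h0 : 0 ≤ s := le_trans (Real.sqrt_nonneg t) hs.1
    have := hPpos (s ^ 2) (sq_nonneg s)
    nlinarith
  unfold primFun
  linarith [hsum]

lemma primFun_diff_le {P : ℝ → ℝ} (hP : ContinuousOn P (Set.Ici 0))
    (hPpos : ∀ s, 0 ≤ s → 0 < P s) (hPmono : MonotoneOn P (Set.Ici 0))
    {t t' : ℝ} (ht : 0 ≤ t) (htt' : t ≤ t') (ht' : t' ≤ 1) :
    primFun P t - primFun P t' ≤ 2 * P 1 * (Real.sqrt t' - Real.sqrt t) := by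
  have hc := integrand_cont hP
  have hsum := intervalIntegral.integral_add_adjacent_intervals
    (hc.intervalIntegrable (μ := MeasureTheory.volume) (Real.sqrt t) (Real.sqrt t'))
    (hc.intervalIntegrable (μ := MeasureTheory.volume) (Real.sqrt t') 1)
  have hmono : (∫ s in Real.sqrt t..Real.sqrt t', 2 * s * P (s ^ 2)) ≤
      ∫ _s in Real.sqrt t..Real.sqrt t', 2 * P 1 := by
    apply intervalIntegral.integral_mono_on (Real.sqrt_le_sqrt htt')
      (hc.intervalIntegrable (μ := MeasureTheory.volume) _ _) (intervalIntegrable_const)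
    intro s hs
    have h0 : 0 ≤ s := le_trans (Real.sqrt_nonneg t) hs.1
    have h1 : s ≤ 1 := le_trans hs.2 (Real.sqrt_le_one.mpr ht')
    have hP1 : P (s ^ 2) ≤ P 1 := hPmono (Set.mem_Ici.mpr (sq_nonneg s)) (Set.mem_Ici.mpr zero_le_one) (by nlinarith)
    have := hPpos (s ^ 2) (sq_nonneg s)
    nlinarith
  rw [intervalIntegral.integral_const] at hmono
  unfold primFun
  have : (Real.sqrt t' - Real.sqrt t) • (2 * P 1) = 2 * P 1 * (Real.sqrt t' - Real.sqrt t) := by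
    rw [smul_eq_mul]; ring
  linarith [hsum, hmono, this ▸ hmono]

lemma sqrt_exp_eq (a : ℝ) : Real.sqrt (Real.exp a) = Real.exp (a / 2) := by
  rw [show Real.exp a = (Real.exp (a / 2)) ^ 2 by
    rw [sq, ← Real.exp_add]; ring_nf]
  exact Real.sqrt_sq (Real.exp_nonneg _)

lemma exp_sub_exp_le {a b : ℝ} (hab : a ≤ b) (hb : b ≤ 0) :
    Real.exp b - Real.exp a ≤ b - a := by
  have h1 := Real.add_one_le_exp (a - b)
  have h2 : Real.exp b * Real.exp (a - b) = Real.exp a := by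
    rw [← Real.exp_add]; ring_nf
  have h3 : Real.exp b ≤ 1 := Real.exp_le_one_iff.mpr hb
  have h4 : 0 < Real.exp b := Real.exp_pos b
  nlinarith

lemma primFun_one (P : ℝ → ℝ) : primFun P 1 = 0 := by
  unfold primFun
  rw [Real.sqrt_one, intervalIntegral.integral_same]

lemma gE_diff_le {P : ℝ → ℝ} (hP : ContinuousOn P (Set.Ici 0))
    (hPpos : ∀ s, 0 ≤ s → 0 < P s) (hPmono : MonotoneOn P (Set.Ici 0))
    {a a' : ℝ} (ha : a ≤ a') (ha0 : a' ≤ 0) :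
    primFun P (Real.exp a) - primFun P (Real.exp a') ≤ P 1 * (a' - a) := by
  have h1 := primFun_diff_le hP hPpos hPmono (Real.exp_nonneg a)
    (Real.exp_le_exp.mpr ha) (Real.exp_le_one_iff.mpr ha0)
  rw [sqrt_exp_eq, sqrt_exp_eq] at h1
  have h2 : Real.exp (a' / 2) - Real.exp (a / 2) ≤ a' / 2 - a / 2 :=
    exp_sub_exp_le (by linarith) (by linarith)
  have hP1 : 0 < P 1 := hPpos 1 zero_le_one
  nlinarith

lemma key_nonneg {P Q : ℝ → ℝ} (hPpos : ∀ s, 0 ≤ s → 0 < P s)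
    (hQpos : ∀ s, 0 ≤ s → 0 < Q s) {lam a b : ℝ} (hlam : 0 ≤ lam) (ha : a ≤ 0) :
    0 ≤ lam * Real.exp b * Q (Real.exp b) * primFun P (Real.exp a) := by
  have h1 : 0 ≤ primFun P (Real.exp a) := primFun_nonneg hPpos (Real.exp_le_one_iff.mpr ha)
  have h2 : 0 < Q (Real.exp b) := hQpos _ (Real.exp_nonneg b)
  have h3 : 0 < Real.exp b := Real.exp_pos b
  positivity

lemma key_mono {P Q : ℝ → ℝ}
    (hPpos : ∀ s, 0 ≤ s → 0 < P s) (hQpos : ∀ s, 0 ≤ s → 0 < Q s)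
    (hPmono : MonotoneOn P (Set.Ici 0)) (hQmono : MonotoneOn Q (Set.Ici 0))
    (hPcont : ContinuousOn P (Set.Ici 0))
    {lam K : ℝ} (hlam : 0 ≤ lam) (hK : lam * P 1 * Q 1 ≤ K)
    {a a' b b' : ℝ} (ha : a ≤ a') (ha0 : a' ≤ 0) (hb : b ≤ b') (hb0 : b' ≤ 0) :
    K * a + lam * Real.exp b * Q (Real.exp b) * primFun P (Real.exp a) ≤
      K * a' + lam * Real.exp b' * Q (Real.exp b') * primFun P (Real.exp a') := by
  have hQb : 0 < Q (Real.exp b) := hQpos _ (Real.exp_nonneg b)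
  have hQb' : 0 < Q (Real.exp b') := hQpos _ (Real.exp_nonneg b')
  have hQ1 : 0 < Q 1 := hQpos 1 zero_le_one
  have hP1 : 0 < P 1 := hPpos 1 zero_le_one
  have hEb : 0 < Real.exp b := Real.exp_pos b
  have hEb' : 0 < Real.exp b' := Real.exp_pos b'
  have hEble : Real.exp b ≤ Real.exp b' := Real.exp_le_exp.mpr hb
  have hEb'1 : Real.exp b' ≤ 1 := Real.exp_le_one_iff.mpr hb0
  have hQmono1 : Q (Real.exp b) ≤ Q (Real.exp b') :=
    hQmono (Set.mem_Ici.mpr (Real.exp_nonneg b)) (Set.mem_Ici.mpr (Real.exp_nonneg b')) hEble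
  have hQmono2 : Q (Real.exp b') ≤ Q 1 :=
    hQmono (Set.mem_Ici.mpr (Real.exp_nonneg b')) (Set.mem_Ici.mpr zero_le_one) hEb'1
  -- E b ≤ E b' ≤ Q 1
  have hE1 : Real.exp b * Q (Real.exp b) ≤ Real.exp b' * Q (Real.exp b') := by nlinarith
  have hE2 : Real.exp b' * Q (Real.exp b') ≤ Q 1 := by nlinarith
  have hg' : 0 ≤ primFun P (Real.exp a') :=
    primFun_nonneg hPpos (Real.exp_le_one_iff.mpr ha0)
  have hganti : primFun P (Real.exp a') ≤ primFun P (Real.exp a) :=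
    primFun_anti hPcont hPpos (Real.exp_nonneg a) (Real.exp_le_exp.mpr ha)
  have hgdiff : primFun P (Real.exp a) - primFun P (Real.exp a') ≤ P 1 * (a' - a) :=
    gE_diff_le hPcont hPpos hPmono ha ha0
  have hE1 : Real.exp b * Q (Real.exp b) ≤ Real.exp b' * Q (Real.exp b') := by nlinarith
  have hE2 : Real.exp b' * Q (Real.exp b') ≤ Q 1 := by nlinarith
  have hg0 : 0 ≤ primFun P (Real.exp a) := le_trans hg' hganti
  have hA : lam * (Real.exp b * Q (Real.exp b)) * primFun P (Real.exp a) ≤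
      lam * (Real.exp b' * Q (Real.exp b')) * primFun P (Real.exp a) :=
    mul_le_mul_of_nonneg_right (mul_le_mul_of_nonneg_left hE1 hlam) hg0
  have h1 : lam * (Real.exp b' * Q (Real.exp b')) *
        (primFun P (Real.exp a) - primFun P (Real.exp a')) ≤
      lam * Q 1 * (primFun P (Real.exp a) - primFun P (Real.exp a')) :=
    mul_le_mul_of_nonneg_right (mul_le_mul_of_nonneg_left hE2 hlam) (sub_nonneg.mpr hganti)
  have h2 : lam * Q 1 * (primFun P (Real.exp a) - primFun P (Real.exp a')) ≤
      lam * Q 1 * (P 1 * (a' - a)) :=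
    mul_le_mul_of_nonneg_left hgdiff (mul_nonneg hlam hQ1.le)
  have h3 : lam * Q 1 * (P 1 * (a' - a)) ≤ K * (a' - a) := by
    have he : lam * Q 1 * (P 1 * (a' - a)) = (lam * P 1 * Q 1) * (a' - a) := by ring
    rw [he]
    exact mul_le_mul_of_nonneg_right hK (by linarith)
  nlinarith [hA, h1, h2, h3]


lemma graphLap_sub {V : Type*} [Fintype V] (ω : V → V → ℝ) (μ : V → ℝ)
    (f g : V → ℝ) (x : V) :
    graphLap ω μ (fun y => f y - g y) x = graphLap ω μ f x - graphLap ω μ g x := by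
  unfold graphLap
  rw [← mul_sub, ← Finset.sum_sub_distrib]
  congr 1
  apply Finset.sum_congr rfl
  intro y _
  ring

noncomputable def lapOp {V : Type*} [Fintype V] (ω : V → V → ℝ) (μ : V → ℝ)
    (K : ℝ) : (V → ℝ) →ₗ[ℝ] (V → ℝ) where
  toFun f := fun x => K * f x - graphLap ω μ f x
  map_add' f g := by
    funext x
    simp only [graphLap, Pi.add_apply]
    rw [Finset.sum_congr rfl (fun y _ => show ω x y * ((f y + g y) - (f x + g x)) =
      ω x y * (f y - f x) + ω x y * (g y - g x) by ring), Finset.sum_add_distrib]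
    ring
  map_smul' c f := by
    funext x
    simp only [graphLap, Pi.smul_apply, smul_eq_mul, RingHom.id_apply]
    rw [Finset.sum_congr rfl (fun y _ => show ω x y * (c * f y - c * f x) =
      c * (ω x y * (f y - f x)) by ring), ← Finset.mul_sum]
    ring

lemma lap_max_principle {V : Type*} [Fintype V] [Nonempty V] (ω : V → V → ℝ) (μ : V → ℝ)
    (hω : ∀ x y, 0 ≤ ω x y) (hμ : ∀ x, 0 < μ x) (K : ℝ) (hK : 0 < K)
    (w : V → ℝ) (h : ∀ x, 0 ≤ K * w x - graphLap ω μ w x) : ∀ x, 0 ≤ w x := by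
  obtain ⟨x₀, -, hx₀⟩ := Finset.exists_min_image Finset.univ w
    ⟨Classical.arbitrary V, Finset.mem_univ _⟩
  have hlap : 0 ≤ graphLap ω μ w x₀ := by
    unfold graphLap
    apply mul_nonneg (by have := hμ x₀; positivity)
    apply Finset.sum_nonneg
    intro y _
    exact mul_nonneg (hω _ _) (by linarith [hx₀ y (Finset.mem_univ y)])
  have h0 := h x₀
  have hw0 : 0 ≤ w x₀ := by
    by_contra hc
    push_neg at hc
    nlinarith
  intro x
  linarith [hx₀ x (Finset.mem_univ x)]

lemma lap_surj {V : Type*} [Fintype V] [Nonempty V] (ω : V → V → ℝ) (μ : V → ℝ)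
    (hω : ∀ x y, 0 ≤ ω x y) (hμ : ∀ x, 0 < μ x) (K : ℝ) (hK : 0 < K)
    (f : V → ℝ) : ∃ u : V → ℝ, ∀ x, K * u x - graphLap ω μ u x = f x := by
  have hinj : Function.Injective (lapOp ω μ K) := by
    rw [injective_iff_map_eq_zero]
    intro u hu
    have h1 : ∀ x, 0 ≤ u x := by
      apply lap_max_principle ω μ hω hμ K hK
      intro x
      have := congrFun hu x
      simp only [lapOp, LinearMap.coe_mk, AddHom.coe_mk, Pi.zero_apply] at this
      linarith [this]
    have h2 : ∀ x, 0 ≤ (-u : V → ℝ) x := by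
      apply lap_max_principle ω μ hω hμ K hK
      intro x
      have hnu := congrFun (map_neg (lapOp ω μ K) u) x
      have h0 := congrFun hu x
      simp only [lapOp, LinearMap.coe_mk, AddHom.coe_mk, Pi.zero_apply,
        Pi.neg_apply] at hnu h0 ⊢
      linarith [hnu, h0]
    funext x
    have ha := h1 x
    have hb := h2 x
    simp only [Pi.neg_apply] at hb
    simp only [Pi.zero_apply]
    linarith
  obtain ⟨u, hu⟩ := LinearMap.surjective_of_injective hinj f
  exact ⟨u, fun x => congrFun hu x⟩

lemma graphLap_neg {V : Type*} [Fintype V] (ω : V → V → ℝ) (μ : V → ℝ)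
    (f : V → ℝ) (x : V) :
    graphLap ω μ (fun y => -f y) x = -graphLap ω μ f x := by
  unfold graphLap
  simp only []
  rw [show (∑ y, ω x y * ((fun y => -f y) y - (fun y => -f y) x)) =
      -∑ y, ω x y * (f y - f x) by
    rw [← Finset.sum_neg_distrib]
    apply Finset.sum_congr rfl
    intro y _
    ring]
  ring

set_option maxHeartbeats 1000000 in
theorem stmt_6
    {V : Type*} [Fintype V] [DecidableEq V]
    (hV : 1 < Fintype.card V)
    (ω : V → V → ℝ) (μ : V → ℝ)
    (hω_nonneg : ∀ x y, 0 ≤ ω x y)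
    (hω_symm : ∀ x y, ω x y = ω y x)
    (hω_diag : ∀ x, ω x x = 0)
    (hconn : ∀ x y : V, x ≠ y → ∃ (n : ℕ) (c : Fin (n + 1) → V),
      c 0 = x ∧ c (Fin.last n) = y ∧ ∀ i : Fin n, 0 < ω (c i.castSucc) (c i.succ))
    (hμ : ∀ x, 0 < μ x)
    (G H : ℝ → ℝ)
    (hGpos : ∀ s, 0 ≤ s → 0 < G s) (hHpos : ∀ s, 0 ≤ s → 0 < H s)
    (hGmono : StrictMonoOn G (Set.Ici 0)) (hHmono : StrictMonoOn H (Set.Ici 0))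
    (hGsmooth : ContDiffOn ℝ (⊤ : ℕ∞) G (Set.Ici 0)) (hHsmooth : ContDiffOn ℝ (⊤ : ℕ∞) H (Set.Ici 0))
    (N1 N2 : ℕ) (hN1 : 0 < N1) (hN2 : 0 < N2)
    (p1 : Fin N1 → V) (p2 : Fin N2 → V)
    (u₀ v₀ : V → ℝ)
    (hu₀ : ∀ x, graphLap ω μ u₀ x =
      -(4 * Real.pi * N1) / graphVol μ + 4 * Real.pi * ∑ j, diracDelta μ (p1 j) x)
    (hv₀ : ∀ x, graphLap ω μ v₀ x =
      -(4 * Real.pi * N2) / graphVol μ + 4 * Real.pi * ∑ j, diracDelta μ (p2 j) x)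
    (lam1 lam2 : ℝ) (hlam1 : 0 < lam1) (hlam12 : lam1 < lam2)
    (u v : V → ℝ) (hsol : isSolution ω μ G H N1 N2 u₀ v₀ lam1 u v)
    (hu : ∀ x, u₀ x + u x ≤ 0) (hv : ∀ x, v₀ x + v x ≤ 0) :
    isLowerSolution ω μ G H N1 N2 u₀ v₀ lam2 u v ∧
      ((∃ u' v' : V → ℝ, isSolution ω μ G H N1 N2 u₀ v₀ lam1 u' v') →
        ∃ u' v' : V → ℝ, isSolution ω μ G H N1 N2 u₀ v₀ lam2 u' v') := by
  classical
  haveI hne : Nonempty V := Fintype.card_pos_iff.mp (by omega)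
  have hGmono' : MonotoneOn G (Set.Ici 0) := hGmono.monotoneOn
  have hHmono' : MonotoneOn H (Set.Ici 0) := hHmono.monotoneOn
  have hGcont : ContinuousOn G (Set.Ici 0) := hGsmooth.continuousOn
  have hHcont : ContinuousOn H (Set.Ici 0) := hHsmooth.continuousOn
  have hG1 : 0 < G 1 := hGpos 1 zero_le_one
  have hH1 : 0 < H 1 := hHpos 1 zero_le_one
  have hlam2 : 0 < lam2 := lt_trans hlam1 hlam12
  constructor
  · -- lower solution
    intro x
    have h1 := (hsol x).1
    have h2 := (hsol x).2
    have hX1 := key_nonneg hGpos hHpos (a := u₀ x + u x) (b := v₀ x + v x)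
      (by linarith : (0:ℝ) ≤ lam2 - lam1) (hu x)
    have hX2 := key_nonneg hHpos hGpos (a := v₀ x + v x) (b := u₀ x + u x)
      (by linarith : (0:ℝ) ≤ lam2 - lam1) (hv x)
    constructor
    · rw [h1]; nlinarith [hX1]
    · rw [h2]; nlinarith [hX2]
  · -- existence part
    intro _
    set K : ℝ := lam2 * G 1 * H 1 + 1 with hKdef
    have hK0 : 0 < K := by
      rw [hKdef]
      have := mul_pos (mul_pos hlam2 hG1) hH1
      linarith
    have hKG : lam2 * G 1 * H 1 ≤ K := by rw [hKdef]; linarith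
    have hKH : lam2 * H 1 * G 1 ≤ K := by rw [hKdef]; nlinarith
    clear_value K
    have hsurj := fun f => lap_surj ω μ hω_nonneg hμ K hK0 f
    choose solveOp hsolveOp using hsurj
    obtain ⟨step, hspec1, hspec2⟩ :
        ∃ step : (V → ℝ) × (V → ℝ) → (V → ℝ) × (V → ℝ),
          (∀ p q x, K * (step (p, q)).1 x - graphLap ω μ (step (p, q)).1 x =
            K * p x + lam2 * Real.exp (v₀ x + q x) * H (Real.exp (v₀ x + q x)) *
              primFun G (Real.exp (u₀ x + p x)) - 4 * Real.pi * N1 / graphVol μ) ∧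
          (∀ p q x, K * (step (p, q)).2 x - graphLap ω μ (step (p, q)).2 x =
            K * q x + lam2 * Real.exp (u₀ x + p x) * G (Real.exp (u₀ x + p x)) *
              primFun H (Real.exp (v₀ x + q x)) - 4 * Real.pi * N2 / graphVol μ) := by
      refine ⟨fun pq =>
        (solveOp (fun x => K * pq.1 x + lam2 * Real.exp (v₀ x + pq.2 x) *
            H (Real.exp (v₀ x + pq.2 x)) * primFun G (Real.exp (u₀ x + pq.1 x)) -
            4 * Real.pi * N1 / graphVol μ),
         solveOp (fun x => K * pq.2 x + lam2 * Real.exp (u₀ x + pq.1 x) *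
            G (Real.exp (u₀ x + pq.1 x)) * primFun H (Real.exp (v₀ x + pq.2 x)) -
            4 * Real.pi * N2 / graphVol μ)),
        fun p q x => hsolveOp _ x, fun p q x => hsolveOp _ x⟩
    -- maximum principle helper for differences
    have hdiff : ∀ a b : V → ℝ,
        (∀ x, 0 ≤ (K * a x - graphLap ω μ a x) - (K * b x - graphLap ω μ b x)) →
        ∀ x, b x ≤ a x := by
      intro a b h
      have hmp := lap_max_principle ω μ hω_nonneg hμ K hK0 (fun y => a y - b y) ?_
      · intro x; linarith [hmp x]
      · intro x
        show 0 ≤ K * (a x - b x) - graphLap ω μ (fun y => a y - b y) x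
        rw [graphLap_sub]
        have := h x
        linarith
    have hub : ∀ x, u x ≤ -u₀ x := fun x => by linarith [hu x]
    have hvb : ∀ x, v x ≤ -v₀ x := fun x => by linarith [hv x]
    have hδ1 : ∀ x, 0 ≤ ∑ j, diracDelta μ (p1 j) x := by
      intro x
      apply Finset.sum_nonneg
      intro j _
      unfold diracDelta
      split_ifs
      · have := hμ (p1 j); positivity
      · exact le_refl 0
    have hδ2 : ∀ x, 0 ≤ ∑ j, diracDelta μ (p2 j) x := by
      intro x
      apply Finset.sum_nonneg
      intro j _
      unfold diracDelta
      split_ifs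
      · have := hμ (p2 j); positivity
      · exact le_refl 0
    have hprim1 : primFun G (Real.exp 0) = 0 := by rw [Real.exp_zero]; exact primFun_one G
    have hprim2 : primFun H (Real.exp 0) = 0 := by rw [Real.exp_zero]; exact primFun_one H
    -- box preservation
    have hbox_step : ∀ p q, (∀ x, u x ≤ p x) → (∀ x, p x ≤ -u₀ x) →
        (∀ x, v x ≤ q x) → (∀ x, q x ≤ -v₀ x) →
        (∀ x, u x ≤ (step (p, q)).1 x) ∧ (∀ x, (step (p, q)).1 x ≤ -u₀ x) ∧
        (∀ x, v x ≤ (step (p, q)).2 x) ∧ (∀ x, (step (p, q)).2 x ≤ -v₀ x) := by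
      intro p q hup hpub hvq hqvb
      have hp0 : ∀ x, u₀ x + p x ≤ 0 := fun x => by linarith [hpub x]
      have hq0 : ∀ x, v₀ x + q x ≤ 0 := fun x => by linarith [hqvb x]
      refine ⟨?_, ?_, ?_, ?_⟩
      · -- u ≤ step.1
        apply hdiff
        intro x
        rw [hspec1 p q x, (hsol x).1]
        have hkm := key_mono hGpos hHpos hGmono' hHmono' hGcont hlam2.le hKG
          (show u₀ x + u x ≤ u₀ x + p x by linarith [hup x]) (hp0 x)
          (show v₀ x + v x ≤ v₀ x + q x by linarith [hvq x]) (hq0 x)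
        have hnn := key_nonneg hGpos hHpos (a := u₀ x + u x) (b := v₀ x + v x)
          (by linarith : (0:ℝ) ≤ lam2 - lam1) (hu x)
        nlinarith [hkm, hnn]
      · -- step.1 ≤ -u₀
        apply hdiff
        intro x
        rw [hspec1 p q x]
        have hlapneg : graphLap ω μ (fun y => -u₀ y) x = -graphLap ω μ u₀ x :=
          graphLap_neg ω μ u₀ x
        rw [hlapneg, hu₀ x, neg_div]
        have hkm := key_mono hGpos hHpos hGmono' hHmono' hGcont hlam2.le hKG
          (hp0 x) (le_refl (0:ℝ)) (hq0 x) (le_refl (0:ℝ))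
        rw [hprim1] at hkm
        have hd := hδ1 x
        have hπ := Real.pi_pos
        nlinarith [hkm, mul_nonneg hπ.le hd]
      · -- v ≤ step.2
        apply hdiff
        intro x
        rw [hspec2 p q x, (hsol x).2]
        have hkm := key_mono hHpos hGpos hHmono' hGmono' hHcont hlam2.le hKH
          (show v₀ x + v x ≤ v₀ x + q x by linarith [hvq x]) (hq0 x)
          (show u₀ x + u x ≤ u₀ x + p x by linarith [hup x]) (hp0 x)
        have hnn := key_nonneg hHpos hGpos (a := v₀ x + v x) (b := u₀ x + u x)
          (by linarith : (0:ℝ) ≤ lam2 - lam1) (hv x)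
        nlinarith [hkm, hnn]
      · -- step.2 ≤ -v₀
        apply hdiff
        intro x
        rw [hspec2 p q x]
        have hlapneg : graphLap ω μ (fun y => -v₀ y) x = -graphLap ω μ v₀ x :=
          graphLap_neg ω μ v₀ x
        rw [hlapneg, hv₀ x, neg_div]
        have hkm := key_mono hHpos hGpos hHmono' hGmono' hHcont hlam2.le hKH
          (hq0 x) (le_refl (0:ℝ)) (hp0 x) (le_refl (0:ℝ))
        rw [hprim2] at hkm
        have hd := hδ2 x
        have hπ := Real.pi_pos
        nlinarith [hkm, mul_nonneg hπ.le hd]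
    -- step is monotone
    have hmono_step : ∀ p q p' q', (∀ x, p x ≤ p' x) → (∀ x, q x ≤ q' x) →
        (∀ x, p' x ≤ -u₀ x) → (∀ x, q' x ≤ -v₀ x) →
        (∀ x, (step (p, q)).1 x ≤ (step (p', q')).1 x) ∧
        (∀ x, (step (p, q)).2 x ≤ (step (p', q')).2 x) := by
      intro p q p' q' hpp hqq hp'b hq'b
      have hp0 : ∀ x, u₀ x + p' x ≤ 0 := fun x => by linarith [hp'b x]
      have hq0 : ∀ x, v₀ x + q' x ≤ 0 := fun x => by linarith [hq'b x]
      constructor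
      · apply hdiff
        intro x
        rw [hspec1 p' q' x, hspec1 p q x]
        have hkm := key_mono hGpos hHpos hGmono' hHmono' hGcont hlam2.le hKG
          (show u₀ x + p x ≤ u₀ x + p' x by linarith [hpp x]) (hp0 x)
          (show v₀ x + q x ≤ v₀ x + q' x by linarith [hqq x]) (hq0 x)
        nlinarith [hkm]
      · apply hdiff
        intro x
        rw [hspec2 p' q' x, hspec2 p q x]
        have hkm := key_mono hHpos hGpos hHmono' hGmono' hHcont hlam2.le hKH
          (show v₀ x + q x ≤ v₀ x + q' x by linarith [hqq x]) (hq0 x)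
          (show u₀ x + p x ≤ u₀ x + p' x by linarith [hpp x]) (hp0 x)
        nlinarith [hkm]
    -- the iteration sequence
    let S : ℕ → (V → ℝ) × (V → ℝ) := fun n => step^[n] (u, v)
    have hS0 : S 0 = (u, v) := rfl
    have hSs : ∀ n, S (n + 1) = step (S n) := fun n =>
      Function.iterate_succ_apply' step n (u, v)
    have hbox : ∀ n, (∀ x, u x ≤ (S n).1 x) ∧ (∀ x, (S n).1 x ≤ -u₀ x) ∧
        (∀ x, v x ≤ (S n).2 x) ∧ (∀ x, (S n).2 x ≤ -v₀ x) := by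
      intro n
      induction n with
      | zero => exact ⟨fun x => le_refl _, hub, fun x => le_refl _, hvb⟩
      | succ n ih =>
        rw [hSs n]
        exact hbox_step (S n).1 (S n).2 ih.1 ih.2.1 ih.2.2.1 ih.2.2.2
    have hmono : ∀ n, (∀ x, (S n).1 x ≤ (S (n + 1)).1 x) ∧
        (∀ x, (S n).2 x ≤ (S (n + 1)).2 x) := by
      intro n
      induction n with
      | zero =>
        exact ⟨(hbox 1).1, (hbox 1).2.2.1⟩
      | succ n ih =>
        have h := hmono_step (S n).1 (S n).2 (S (n + 1)).1 (S (n + 1)).2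
          ih.1 ih.2 (hbox (n + 1)).2.1 (hbox (n + 1)).2.2.2
        constructor
        · intro x
          rw [hSs (n + 1), hSs n]
          rw [hSs n] at h
          exact h.1 x
        · intro x
          rw [hSs (n + 1), hSs n]
          rw [hSs n] at h
          exact h.2 x
    -- limits
    have hbdd1 : ∀ x, BddAbove (Set.range fun n => (S n).1 x) := by
      intro x
      refine ⟨-u₀ x, ?_⟩
      rintro r ⟨n, rfl⟩
      exact (hbox n).2.1 x
    have hbdd2 : ∀ x, BddAbove (Set.range fun n => (S n).2 x) := by
      intro x
      refine ⟨-v₀ x, ?_⟩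
      rintro r ⟨n, rfl⟩
      exact (hbox n).2.2.2 x
    set U : V → ℝ := fun x => ⨆ n, (S n).1 x with hUdef
    set W : V → ℝ := fun x => ⨆ n, (S n).2 x with hWdef
    have hmonoU : ∀ x, Monotone fun n => (S n).1 x := fun x =>
      monotone_nat_of_le_succ fun n => (hmono n).1 x
    have hmonoW : ∀ x, Monotone fun n => (S n).2 x := fun x =>
      monotone_nat_of_le_succ fun n => (hmono n).2 x
    have htendU : ∀ x, Filter.Tendsto (fun n => (S n).1 x) Filter.atTop (nhds (U x)) :=
      fun x => tendsto_atTop_ciSup (hmonoU x) (hbdd1 x)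
    have htendW : ∀ x, Filter.Tendsto (fun n => (S n).2 x) Filter.atTop (nhds (W x)) :=
      fun x => tendsto_atTop_ciSup (hmonoW x) (hbdd2 x)
    have hUle : ∀ x, U x ≤ -u₀ x := fun x => ciSup_le fun n => (hbox n).2.1 x
    have hWle : ∀ x, W x ≤ -v₀ x := fun x => ciSup_le fun n => (hbox n).2.2.2 x
    have hSleU : ∀ n x, (S n).1 x ≤ U x := fun n x => le_ciSup (hbdd1 x) n
    have hSleW : ∀ n x, (S n).2 x ≤ W x := fun n x => le_ciSup (hbdd2 x) n
    have hU0 : ∀ x, u₀ x + U x ≤ 0 := fun x => by linarith [hUle x]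
    have hW0 : ∀ x, v₀ x + W x ≤ 0 := fun x => by linarith [hWle x]
    -- tendsto of the Laplacians
    have hlapU : ∀ x, Filter.Tendsto (fun n => graphLap ω μ (S n).1 x) Filter.atTop
        (nhds (graphLap ω μ U x)) := by
      intro x
      unfold graphLap
      apply Filter.Tendsto.const_mul
      apply tendsto_finset_sum
      intro y _
      exact ((htendU y).sub (htendU x)).const_mul _
    have hlapW : ∀ x, Filter.Tendsto (fun n => graphLap ω μ (S n).2 x) Filter.atTop
        (nhds (graphLap ω μ W x)) := by
      intro x
      unfold graphLap
      apply Filter.Tendsto.const_mul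
      apply tendsto_finset_sum
      intro y _
      exact ((htendW y).sub (htendW x)).const_mul _
    -- tendsto of the nonlinear terms
    have hprimU : ∀ x, Filter.Tendsto (fun n => primFun G (Real.exp (u₀ x + (S n).1 x)))
        Filter.atTop (nhds (primFun G (Real.exp (u₀ x + U x)))) := by
      intro x
      apply tendsto_of_tendsto_of_tendsto_of_le_of_le
        (g := fun _ : ℕ => primFun G (Real.exp (u₀ x + U x)))
        (h := fun n => primFun G (Real.exp (u₀ x + U x)) +
          G 1 * ((u₀ x + U x) - (u₀ x + (S n).1 x)))
      · exact tendsto_const_nhds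
      · have : Filter.Tendsto (fun n => primFun G (Real.exp (u₀ x + U x)) +
            G 1 * ((u₀ x + U x) - (u₀ x + (S n).1 x))) Filter.atTop
            (nhds (primFun G (Real.exp (u₀ x + U x)) +
              G 1 * ((u₀ x + U x) - (u₀ x + U x)))) :=
          tendsto_const_nhds.add
            (((tendsto_const_nhds.sub (tendsto_const_nhds.add (htendU x))).const_mul (G 1)))
        simpa using this
      · intro n
        exact primFun_anti hGcont hGpos (Real.exp_nonneg _)
          (Real.exp_le_exp.mpr (by linarith [hSleU n x]))
      · intro n
        show primFun G (Real.exp (u₀ x + (S n).1 x)) ≤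
          primFun G (Real.exp (u₀ x + U x)) + G 1 * ((u₀ x + U x) - (u₀ x + (S n).1 x))
        have := gE_diff_le hGcont hGpos hGmono'
          (show u₀ x + (S n).1 x ≤ u₀ x + U x by linarith [hSleU n x]) (hU0 x)
        linarith
    have hprimW : ∀ x, Filter.Tendsto (fun n => primFun H (Real.exp (v₀ x + (S n).2 x)))
        Filter.atTop (nhds (primFun H (Real.exp (v₀ x + W x)))) := by
      intro x
      apply tendsto_of_tendsto_of_tendsto_of_le_of_le
        (g := fun _ : ℕ => primFun H (Real.exp (v₀ x + W x)))
        (h := fun n => primFun H (Real.exp (v₀ x + W x)) +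
          H 1 * ((v₀ x + W x) - (v₀ x + (S n).2 x)))
      · exact tendsto_const_nhds
      · have : Filter.Tendsto (fun n => primFun H (Real.exp (v₀ x + W x)) +
            H 1 * ((v₀ x + W x) - (v₀ x + (S n).2 x))) Filter.atTop
            (nhds (primFun H (Real.exp (v₀ x + W x)) +
              H 1 * ((v₀ x + W x) - (v₀ x + W x)))) :=
          tendsto_const_nhds.add
            (((tendsto_const_nhds.sub (tendsto_const_nhds.add (htendW x))).const_mul (H 1)))
        simpa using this
      · intro n
        exact primFun_anti hHcont hHpos (Real.exp_nonneg _)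
          (Real.exp_le_exp.mpr (by linarith [hSleW n x]))
      · intro n
        show primFun H (Real.exp (v₀ x + (S n).2 x)) ≤
          primFun H (Real.exp (v₀ x + W x)) + H 1 * ((v₀ x + W x) - (v₀ x + (S n).2 x))
        have := gE_diff_le hHcont hHpos hHmono'
          (show v₀ x + (S n).2 x ≤ v₀ x + W x by linarith [hSleW n x]) (hW0 x)
        linarith
    have hexpU : ∀ x, Filter.Tendsto (fun n => Real.exp (u₀ x + (S n).1 x)) Filter.atTop
        (nhds (Real.exp (u₀ x + U x))) := fun x =>
      (tendsto_const_nhds.add (htendU x)).rexp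
    have hexpW : ∀ x, Filter.Tendsto (fun n => Real.exp (v₀ x + (S n).2 x)) Filter.atTop
        (nhds (Real.exp (v₀ x + W x))) := fun x =>
      (tendsto_const_nhds.add (htendW x)).rexp
    have hHt : ∀ x, Filter.Tendsto (fun n => H (Real.exp (v₀ x + (S n).2 x))) Filter.atTop
        (nhds (H (Real.exp (v₀ x + W x)))) := by
      intro x
      have hca : ContinuousAt H (Real.exp (v₀ x + W x)) :=
        hHcont.continuousAt (Ici_mem_nhds (Real.exp_pos _))
      exact (hca.tendsto).comp (hexpW x)
    have hGt : ∀ x, Filter.Tendsto (fun n => G (Real.exp (u₀ x + (S n).1 x))) Filter.atTop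
        (nhds (G (Real.exp (u₀ x + U x)))) := by
      intro x
      have hca : ContinuousAt G (Real.exp (u₀ x + U x)) :=
        hGcont.continuousAt (Ici_mem_nhds (Real.exp_pos _))
      exact (hca.tendsto).comp (hexpU x)
    -- pass to the limit in equation 1
    have heq1 : ∀ x, graphLap ω μ U x =
        -lam2 * Real.exp (v₀ x + W x) * H (Real.exp (v₀ x + W x)) *
          primFun G (Real.exp (u₀ x + U x)) + 4 * Real.pi * N1 / graphVol μ := by
      intro x
      have hL : Filter.Tendsto (fun n => K * (S (n + 1)).1 x - graphLap ω μ (S (n + 1)).1 x)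
          Filter.atTop (nhds (K * U x - graphLap ω μ U x)) :=
        (((htendU x).const_mul K).sub (hlapU x)).comp (Filter.tendsto_add_atTop_nat 1)
      have hR : Filter.Tendsto (fun n => K * (S n).1 x +
          lam2 * Real.exp (v₀ x + (S n).2 x) * H (Real.exp (v₀ x + (S n).2 x)) *
            primFun G (Real.exp (u₀ x + (S n).1 x)) - 4 * Real.pi * N1 / graphVol μ)
          Filter.atTop (nhds (K * U x +
          lam2 * Real.exp (v₀ x + W x) * H (Real.exp (v₀ x + W x)) *
            primFun G (Real.exp (u₀ x + U x)) - 4 * Real.pi * N1 / graphVol μ)) := by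
        apply Filter.Tendsto.sub _ tendsto_const_nhds
        apply Filter.Tendsto.add ((htendU x).const_mul K)
        exact (((hexpW x).const_mul lam2).mul (hHt x)).mul (hprimU x)
      have heqn : ∀ n, K * (S (n + 1)).1 x - graphLap ω μ (S (n + 1)).1 x =
          K * (S n).1 x +
          lam2 * Real.exp (v₀ x + (S n).2 x) * H (Real.exp (v₀ x + (S n).2 x)) *
            primFun G (Real.exp (u₀ x + (S n).1 x)) - 4 * Real.pi * N1 / graphVol μ := by
        intro n
        rw [hSs n]
        exact hspec1 (S n).1 (S n).2 x
      have := tendsto_nhds_unique (hL.congr heqn) hR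
      linarith [this]
    have heq2 : ∀ x, graphLap ω μ W x =
        -lam2 * Real.exp (u₀ x + U x) * G (Real.exp (u₀ x + U x)) *
          primFun H (Real.exp (v₀ x + W x)) + 4 * Real.pi * N2 / graphVol μ := by
      intro x
      have hL : Filter.Tendsto (fun n => K * (S (n + 1)).2 x - graphLap ω μ (S (n + 1)).2 x)
          Filter.atTop (nhds (K * W x - graphLap ω μ W x)) :=
        (((htendW x).const_mul K).sub (hlapW x)).comp (Filter.tendsto_add_atTop_nat 1)
      have hR : Filter.Tendsto (fun n => K * (S n).2 x +
          lam2 * Real.exp (u₀ x + (S n).1 x) * G (Real.exp (u₀ x + (S n).1 x)) *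
            primFun H (Real.exp (v₀ x + (S n).2 x)) - 4 * Real.pi * N2 / graphVol μ)
          Filter.atTop (nhds (K * W x +
          lam2 * Real.exp (u₀ x + U x) * G (Real.exp (u₀ x + U x)) *
            primFun H (Real.exp (v₀ x + W x)) - 4 * Real.pi * N2 / graphVol μ)) := by
        apply Filter.Tendsto.sub _ tendsto_const_nhds
        apply Filter.Tendsto.add ((htendW x).const_mul K)
        exact (((hexpU x).const_mul lam2).mul (hGt x)).mul (hprimW x)
      have heqn : ∀ n, K * (S (n + 1)).2 x - graphLap ω μ (S (n + 1)).2 x =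
          K * (S n).2 x +
          lam2 * Real.exp (u₀ x + (S n).1 x) * G (Real.exp (u₀ x + (S n).1 x)) *
            primFun H (Real.exp (v₀ x + (S n).2 x)) - 4 * Real.pi * N2 / graphVol μ := by
        intro n
        rw [hSs n]
        exact hspec2 (S n).1 (S n).2 x
      have := tendsto_nhds_unique (hL.congr heqn) hR
      linarith [this]
    exact ⟨U, W, fun x => ⟨heq1 x, heq2 x⟩⟩
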